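/- arXiv:1406.6533 — 2 statements merged into one kernel-verified Lean document; each statement's English description precedes it below -/
import Mathlib

section
/- Let ⟨V,E,γ,T⟩ be a level-connected proper cl-graph with levels V_1,…,V_k, and for each i let T_i be the subtree of the hierarchy T restricted to leaves in V_i. Suppose (O_1,…,O_k) is a planar combinatorial level drawing such that each O_i is compatible with T_i. Then for any two distinct clusters μ, ν of T with μ not an ancestor or descendant of ν, and any two consecutive levels i, i+1 both meeting μ and ν: all vertices of μ precede all vertices of ν in O_i if and only if all vertices of μ precede all vertices of ν in O_{i+1}. -/
/-- A combinatorial level drawing `O` (a strict linear order per level) of a proper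
level graph is planar if no two distinct edges between consecutive levels cross. -/
def LevelPlanar {V : Type*} (E : Set (V × V)) (γ : V → ℕ) (O : ℕ → V → V → Prop) : Prop :=
  ∀ u v w z : V, (u, v) ∈ E → (w, z) ∈ E → γ u = γ w → γ v = γ z → ¬(u = w ∧ v = z) →
    ¬((O (γ u) u w ∧ O (γ v) z v) ∨ (O (γ u) w u ∧ O (γ v) v z))

theorem cluster_order_propagates {V : Type*} (E : Set (V × V)) (γ : V → ℕ)
    (O : ℕ → V → V → Prop)
    (htot : ∀ i u v, γ u = i → γ v = i → u ≠ v → O i u v ∨ O i v u)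
    (hasym : ∀ i u v, O i u v → ¬ O i v u)
    (htrans : ∀ i u v w, O i u v → O i v w → O i u w)
    (hproper : ∀ e ∈ E, γ e.2 = γ e.1 + 1)
    (hplanar : LevelPlanar E γ O)
    (μ ν : Set V) (hμν : μ ≠ ν) (hdisj : Disjoint μ ν)
    (hconnμ : ∀ j, (∃ a ∈ μ, γ a = j) → (∃ a ∈ μ, γ a = j + 1) →
      ∃ a ∈ μ, ∃ b ∈ μ, γ a = j ∧ γ b = j + 1 ∧ (a, b) ∈ E)
    (hconnν : ∀ j, (∃ a ∈ ν, γ a = j) → (∃ a ∈ ν, γ a = j + 1) →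
      ∃ a ∈ ν, ∃ b ∈ ν, γ a = j ∧ γ b = j + 1 ∧ (a, b) ∈ E)
    (hintμ : ∀ j x y z, x ∈ μ → z ∈ μ → γ x = j → γ z = j → γ y = j →
      O j x y → O j y z → y ∈ μ)
    (hintν : ∀ j x y z, x ∈ ν → z ∈ ν → γ x = j → γ z = j → γ y = j →
      O j x y → O j y z → y ∈ ν)
    (i : ℕ)
    (hμi : ∃ a ∈ μ, γ a = i) (hμi1 : ∃ a ∈ μ, γ a = i + 1)
    (hνi : ∃ a ∈ ν, γ a = i) (hνi1 : ∃ a ∈ ν, γ a = i + 1) :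
    ((∀ a ∈ μ, ∀ b ∈ ν, γ a = i → γ b = i → O i a b) ↔
      (∀ a ∈ μ, ∀ b ∈ ν, γ a = i + 1 → γ b = i + 1 → O (i + 1) a b)) := by

  obtain ⟨a, haμ, b, hbμ, hga, hgb, habE⟩ := hconnμ i hμi hμi1
  obtain ⟨c, hcν, d, hdν, hgc, hgd, hcdE⟩ := hconnν i hνi hνi1
  have hd := Set.disjoint_left.mp hdisj
  -- key lemma: one witness pair propagates to everyone on the level
  have key : ∀ j (x y : V), x ∈ μ → y ∈ ν → γ x = j → γ y = j → O j x y →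
      ∀ a' ∈ μ, ∀ b' ∈ ν, γ a' = j → γ b' = j → O j a' b' := by
    intro j x y hx hy hgx hgy hxy a' ha' b' hb' hga' hgb'
    by_contra hno
    have hne : a' ≠ b' := fun h => hd ha' (h ▸ hb')
    have hba : O j b' a' := (htot j a' b' hga' hgb' hne).resolve_left hno
    have hne2 : x ≠ b' := fun h => hd hx (h ▸ hb')
    rcases htot j x b' hgx hgb' hne2 with h1 | h1
    · exact hd (hintμ j x b' a' hx ha' hgx hga' hgb' h1 hba) hb'
    · exact hd hx (hintν j b' x y hb' hy hgb' hgy hgx h1 hxy)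
  have hac : a ≠ c := fun h => hd haμ (h ▸ hcν)
  have hbd : b ≠ d := fun h => hd hbμ (h ▸ hdν)
  have hplan := hplanar a b c d habE hcdE (hga.trans hgc.symm) (hgb.trans hgd.symm)
    (fun h => hac h.1)
  rw [hga, hgb] at hplan
  push_neg at hplan
  constructor
  · intro h a' ha' b' hb' hga' hgb'
    have hac' : O i a c := h a haμ c hcν hga hgc
    have hnd : ¬ O (i+1) d b := fun hdb => hplan.1 hac' hdb
    have hbd' : O (i+1) b d := (htot (i+1) b d hgb hgd hbd).resolve_right
      (fun h2 => hnd h2)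
    exact key (i+1) b d hbμ hdν hgb hgd hbd' a' ha' b' hb' hga' hgb'
  · intro h a' ha' b' hb' hga' hgb'
    have hbd' : O (i+1) b d := h b hbμ d hdν hgb hgd
    have hnc : ¬ O i c a := fun hca => hplan.2 hca hbd'
    have hac' : O i a c := (htot i a c hga hgc hac).resolve_right hnc
    exact key i a c haμ hcν hga hgc hac' a' ha' b' hb' hga' hgb'
end

section
/- Let ⟨A,C⟩ be a Betweenness instance with solution order O, and build the combinatorial drawing of the reduction graph by placing, on every level, each vertex at the rank of its associated element of A in O (v and w placed arbitrarily on their singleton levels). Then for every triple t_i = ⟨α,β,δ⟩ ∈ C, the three vertices u_α(i), u_β(i), u_δ(i) on level 2i appear either in the order (u_α(i), u_β(i), u_δ(i)) or its reverse, and in both cases the resulting order on level 2i is compatible with the binary tree T_{2i} having α separated first. -/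
inductive RTree (L : Type*) : Type _
  | leaf (l : L) : RTree L
  | node (children : List (RTree L)) : RTree L

def RTree.leaves {L : Type*} : RTree L → List L
  | .leaf l => [l]
  | .node cs => cs.attach.flatMap (fun c => c.1.leaves)
decreasing_by
  have := List.sizeOf_lt_of_mem c.2
  simp only [RTree.node.sizeOf_spec]
  omega

inductive RTree.Subtree {L : Type*} : RTree L → RTree L → Prop
  | refl (t : RTree L) : Subtree t t
  | child {s c : RTree L} {cs : List (RTree L)} : c ∈ cs → Subtree s c → Subtree s (RTree.node cs)

def RTree.leafSet {L : Type*} (t : RTree L) : Set L := {l | l ∈ t.leaves}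

def IsInterval {L : Type*} (r : L → L → Prop) (U S : Set L) : Prop :=
  ∀ x y z, x ∈ S → z ∈ S → y ∈ U → r x y → r y z → y ∈ S

def Compatible {L : Type*} (r : L → L → Prop) (T : RTree L) : Prop :=
  ∀ s, RTree.Subtree s T → IsInterval r T.leafSet s.leafSet

/-! An interval of an interval is an interval, so compatibility can be checked child by child.
Singletons are always intervals, and the leaves `β, δ` below `x` form an interval among
`α, β, δ` because the solution order puts `α` at one end of the triple. -/

namespace RTree

variable {L : Type*}

theorem leaves_node (cs : List (RTree L)) : (node cs).leaves = cs.flatMap leaves := by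
  rw [leaves]
  simp

@[simp]
theorem leafSet_leaf (l : L) : (leaf l).leafSet = {l} := by
  ext; simp [leafSet, leaves]

theorem mem_leafSet_node {cs : List (RTree L)} {l : L} :
    l ∈ (node cs).leafSet ↔ ∃ c ∈ cs, l ∈ c.leafSet := by
  simp [leafSet, leaves_node]

@[simp]
theorem leafSet_node_nil : (node ([] : List (RTree L))).leafSet = ∅ := by
  ext; simp [mem_leafSet_node]

@[simp]
theorem leafSet_node_cons (c : RTree L) (cs : List (RTree L)) :
    (node (c :: cs)).leafSet = c.leafSet ∪ (node cs).leafSet := by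
  ext; simp [mem_leafSet_node]

theorem Subtree.leafSet_subset {s t : RTree L} (h : Subtree s t) : s.leafSet ⊆ t.leafSet := by
  induction h with
  | refl => exact subset_rfl
  | child hc _ ih => exact fun l hl => mem_leafSet_node.2 ⟨_, hc, ih hl⟩

end RTree

section IsInterval

variable {L : Type*} {r : L → L → Prop} {U V S : Set L}

theorem isInterval_self : IsInterval r U U :=
  fun _ _ _ _ _ hy _ _ => hy

theorem IsInterval.trans (hS : IsInterval r V S) (hV : IsInterval r U V) (hSV : S ⊆ V) :
    IsInterval r U S :=
  fun x y z hx hz hy hxy hyz =>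
    hS x y z hx hz (hV x y z (hSV hx) (hSV hz) hy hxy hyz) hxy hyz

theorem isInterval_singleton [Std.Asymm r] (l : L) : IsInterval r U {l} := by
  rintro x y z rfl rfl - hxy hyz
  exact (asymm hxy hyz).elim

theorem isInterval_insert_of_bound [Std.Asymm r] {c : L}
    (hc : (∀ x ∈ S, r c x) ∨ (∀ x ∈ S, r x c)) : IsInterval r (insert c S) S := by
  rintro x y z hx hz (rfl | hy) hxy hyz
  · rcases hc with hc | hc
    · exact (asymm hxy (hc x hx)).elim
    · exact (asymm hyz (hc z hz)).elim
  · exact hy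

end IsInterval

section Compatible

variable {L : Type*} {r : L → L → Prop}

theorem compatible_leaf (l : L) : Compatible r (.leaf l) := fun s hs => by
  cases hs
  exact isInterval_self

theorem compatible_node {cs : List (RTree L)}
    (h : ∀ c ∈ cs, Compatible r c ∧ IsInterval r (RTree.node cs).leafSet c.leafSet) :
    Compatible r (.node cs) := fun s hs => by
  rcases hs with _ | ⟨hc, hs⟩
  · exact isInterval_self
  · exact ((h _ hc).1 s hs).trans (h _ hc).2 hs.leafSet_subset

theorem compatible_node_map_leaf [Std.Asymm r] (ls : List L) :
    Compatible r (.node (ls.map .leaf)) := by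
  refine compatible_node fun c hc => ?_
  obtain ⟨l, -, rfl⟩ := List.mem_map.1 hc
  exact ⟨compatible_leaf l, by simpa using isInterval_singleton l⟩

end Compatible

theorem triple_level_compatible_general {A : Type*} (r : A → A → Prop) [IsStrictTotalOrder A r]
    (C : Set (A × A × A))
    (hsol : ∀ t ∈ C, (r t.1 t.2.1 ∧ r t.2.1 t.2.2) ∨ (r t.2.2 t.2.1 ∧ r t.2.1 t.1))
    (α β δ : A) (ht : (α, β, δ) ∈ C) :
    ((r α β ∧ r β δ) ∨ (r δ β ∧ r β α)) ∧
      Compatible r (RTree.node [RTree.leaf α, RTree.node [RTree.leaf β, RTree.leaf δ]]) := by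
  have horder := hsol _ ht
  refine ⟨horder, compatible_node fun c hc => ?_⟩
  obtain rfl | rfl := List.mem_pair.1 hc
  · exact ⟨compatible_leaf α, by simpa using isInterval_singleton α⟩
  · refine ⟨compatible_node_map_leaf [β, δ], ?_⟩
    simp only [RTree.leafSet_node_cons, RTree.leafSet_node_nil, RTree.leafSet_leaf,
      Set.union_empty, Set.singleton_union]
    refine isInterval_insert_of_bound ?_
    rcases horder with ⟨hαβ, hβδ⟩ | ⟨hδβ, hβα⟩
    · exact .inl (by simp [hαβ, _root_.trans hαβ hβδ])
    · exact .inr (by simp [hβα, _root_.trans hδβ hβα])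

theorem triple_level_compatible {A : Type*} (r : A → A → Prop) [IsStrictTotalOrder A r]
    (C : Set (A × A × A))
    (hsol : ∀ t ∈ C, (r t.1 t.2.1 ∧ r t.2.1 t.2.2) ∨ (r t.2.2 t.2.1 ∧ r t.2.1 t.1))
    (α β δ : A) (ht : (α, β, δ) ∈ C)
    (hd1 : α ≠ β) (hd2 : β ≠ δ) (hd3 : α ≠ δ) :
    ((r α β ∧ r β δ) ∨ (r δ β ∧ r β α)) ∧
      Compatible r (RTree.node [RTree.leaf α, RTree.node [RTree.leaf β, RTree.leaf δ]]) :=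
  triple_level_compatible_general r C hsol α β δ ht
end
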